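/- Let d, k be positive integers with k ≥ d + 1 and ε > 0 with ε ≤ d². There exist constants C and c = c(d, ε) such that for every graph G on n vertices with maximum average degree at most d - ε, the diameter of the reconfiguration graph R_k(G) is at most C·n^c. -/

import Mathlib

/-!
In a graph with maximum average degree at most `d - ε`, the vertices of degree less than `d`
form a set of size at least `ε n / d`, which greedily contains an independent set `S` of size
at least `ε n / d²`. Recolour `G - S` by induction and lift each step to `G`: before a vertex
takes a new colour, its neighbours in `S` holding that colour move to a free colour (they have
fewer than `d ≤ k - 1` neighbours); at the end `S` is recoloured to its target directly.
A vertex of `S` thus moves at most `(d - 1) F(|G - S|) + 1` times and any other vertex at most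
`F(|G - S|)` times, and `F(n) = d n ^ c` with `(1 - ε / (2d²)) ^ c = 1 / d` absorbs this
recursion because `|G - S| ≤ (1 - ε / d²) n`.
-/

/-- A proper `k`-colouring of `G`. -/
abbrev PropColoring {V : Type*} (G : SimpleGraph V) (k : ℕ) :=
  {f : V → Fin k // ∀ u v, G.Adj u v → f u ≠ f v}

/-- The reconfiguration graph `R_k(G)`: vertices are the proper `k`-colourings of `G`,
two colourings adjacent iff they differ on exactly one vertex. -/
def ReconfGraph {V : Type*} (G : SimpleGraph V) (k : ℕ) : SimpleGraph (PropColoring G k) where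
  Adj f g := ∃ v, f.1 v ≠ g.1 v ∧ ∀ w, w ≠ v → f.1 w = g.1 w
  symm := by constructor; rintro f g ⟨v, hv, hw⟩; exact ⟨v, hv.symm, fun w h => (hw w h).symm⟩
  loopless := by constructor; rintro f ⟨v, hv, _⟩; exact hv rfl

/-- The number of steps along a walk in the reconfiguration graph at which the colour of
the vertex `u` changes. -/
def recolorCount {V : Type*} {G : SimpleGraph V} {k : ℕ} (u : V)
    {α β : PropColoring G k} (p : (ReconfGraph G k).Walk α β) : ℕ :=
  ((p.support.zip p.support.tail).filter (fun q => decide (q.1.1 u ≠ q.2.1 u))).length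

/-- Restriction of a proper colouring of `G` to an induced subgraph. -/
def PropColoring.restrict {V : Type*} {G : SimpleGraph V} {k : ℕ} (s : Set V)
    (α : PropColoring G k) : PropColoring (G.induce s) k :=
  ⟨fun v => α.1 v.1, fun u v h => α.2 u.1 v.1 h⟩

open SimpleGraph Finset

namespace ReconfGraph

variable {V : Type*} {G : SimpleGraph V} {k : ℕ}

@[simp] lemma recolorCount_nil (u : V) (α : PropColoring G k) :
    recolorCount u (Walk.nil : (ReconfGraph G k).Walk α α) = 0 := rfl

lemma recolorCount_cons (u : V) {α β γ : PropColoring G k} (h : (ReconfGraph G k).Adj α β)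
    (p : (ReconfGraph G k).Walk β γ) :
    recolorCount u (Walk.cons h p) = (if α.1 u = β.1 u then 0 else 1) + recolorCount u p := by
  unfold recolorCount
  rw [Walk.support_cons]
  conv_lhs => rw [← p.cons_tail_support]
  simp only [List.zip_cons_cons, List.tail_cons, List.filter_cons]
  rw [p.cons_tail_support]
  by_cases hc : α.1 u = β.1 u <;> simp [hc, Nat.add_comm]

lemma recolorCount_cons_of_ne [DecidableEq V] {α β γ : PropColoring G k}
    (h : (ReconfGraph G k).Adj α β) (p : (ReconfGraph G k).Walk β γ) {v : V} (hv : α.1 v ≠ β.1 v) (u : V) :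
    recolorCount u (Walk.cons h p) = (if u = v then 1 else 0) + recolorCount u p := by
  obtain ⟨w, -, hw⟩ := id h
  have hvw : v = w := by_contra fun hvw => hv (hw v hvw)
  rw [recolorCount_cons]
  by_cases huv : u = v
  · simp [huv, hv]
  · simp [huv, hw u (hvw ▸ huv)]

lemma recolorCount_append (u : V) {α β γ : PropColoring G k}
    (p : (ReconfGraph G k).Walk α β) (q : (ReconfGraph G k).Walk β γ) :
    recolorCount u (p.append q) = recolorCount u p + recolorCount u q := by
  induction p with
  | nil => simp
  | cons h p ih => rw [Walk.cons_append, recolorCount_cons, recolorCount_cons, ih, add_assoc]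

lemma length_eq_sum_recolorCount [Fintype V] {α β : PropColoring G k}
    (p : (ReconfGraph G k).Walk α β) : p.length = ∑ v, recolorCount v p := by
  classical
  induction p with
  | nil => simp
  | cons h p ih =>
    obtain ⟨v, hv, -⟩ := id h
    simp [recolorCount_cons_of_ne h p hv, sum_add_distrib, ← ih, add_comm]

end ReconfGraph

namespace PropColoring

variable {V : Type*} {G : SimpleGraph V} {k : ℕ}

def recolor [DecidableEq V] (γ : PropColoring G k) (v : V) (c : Fin k)
    (hc : ∀ w, G.Adj v w → γ.1 w ≠ c) : PropColoring G k :=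
  ⟨Function.update γ.1 v c, fun x y hxy => by
    rcases eq_or_ne x v with rfl | hx
    · simpa [G.ne_of_adj hxy |>.symm] using (hc y hxy).symm
    rcases eq_or_ne y v with rfl | hy
    · simpa [hx] using hc x hxy.symm
    · simpa [hx, hy] using γ.2 x y hxy⟩

@[simp] lemma coe_recolor [DecidableEq V] (γ : PropColoring G k) (v : V) (c : Fin k)
    (hc : ∀ w, G.Adj v w → γ.1 w ≠ c) : (γ.recolor v c hc).1 = Function.update γ.1 v c := rfl

lemma restrict_eq_iff (s : Set V) (γ : PropColoring G k) (A : PropColoring (G.induce s) k) :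
    γ.restrict s = A ↔ ∀ x : s, γ.1 x = A.1 x := by
  rw [Subtype.ext_iff, funext_iff]
  rfl

lemma exists_color_ne_of_degree_lt [Fintype V] [DecidableRel G.Adj] (γ : PropColoring G k)
    {v : V} (hv : G.degree v + 1 < k) (b : Fin k) :
    ∃ c, c ≠ b ∧ ∀ w, G.Adj v w → γ.1 w ≠ c := by
  classical
  have hcard : #(insert b ((G.neighborFinset v).image γ.1)) < #(univ : Finset (Fin k)) :=
    calc #(insert b ((G.neighborFinset v).image γ.1))
        ≤ #((G.neighborFinset v).image γ.1) + 1 := card_insert_le _ _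
      _ ≤ G.degree v + 1 := by grw [card_image_le, card_neighborFinset_eq_degree]
      _ < #(univ : Finset (Fin k)) := by simpa using hv
  obtain ⟨c, -, hc⟩ := exists_mem_notMem_of_card_lt_card hcard
  refine ⟨c, fun hcb => hc (hcb ▸ mem_insert_self _ _), fun w hw hwc => hc ?_⟩
  exact mem_insert_of_mem (mem_image.2 ⟨w, (G.mem_neighborFinset v w).2 hw, hwc⟩)

end PropColoring

namespace ReconfGraph

variable {V : Type*} {G : SimpleGraph V} {k : ℕ}

lemma adj_recolor [DecidableEq V] (γ : PropColoring G k) {v : V} {c : Fin k}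
    (hc : ∀ w, G.Adj v w → γ.1 w ≠ c) (hv : γ.1 v ≠ c) :
    (ReconfGraph G k).Adj γ (γ.recolor v c hc) :=
  ⟨v, by simpa using hv, fun w hw => by simp [hw]⟩

/-- Independence of `S` lets each vertex go straight to its target colour. -/
lemma exists_walk_of_eq_off_indepSet [DecidableEq V] {S : Finset V}
    (hS : G.IsIndepSet S) {γ β : PropColoring G k} (h : ∀ x ∉ S, γ.1 x = β.1 x) :
    ∃ p : (ReconfGraph G k).Walk γ β,
      ∀ x, recolorCount x p ≤ if γ.1 x = β.1 x then 0 else 1 := by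
  induction S using Finset.induction_on generalizing γ with
  | empty =>
    obtain rfl : γ = β := Subtype.ext (funext fun x => h x (notMem_empty x))
    exact ⟨Walk.nil, by simp⟩
  | insert v S _ ih =>
    have hS' : G.IsIndepSet S := hS.mono (by simp)
    by_cases hv : γ.1 v = β.1 v
    · refine ih hS' fun x hx => ?_
      rcases eq_or_ne x v with rfl | hxv
      · exact hv
      · exact h x (by simp [hxv, hx])
    have hc : ∀ w, G.Adj v w → γ.1 w ≠ β.1 v := by
      intro w hw
      have hwS : w ∉ insert v S := fun hw' =>
        hS (mem_insert_self v S) hw' (G.ne_of_adj hw) hw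
      rw [h w hwS]
      exact (β.2 v w hw).symm
    obtain ⟨p, hp⟩ := ih hS' (γ := γ.recolor v (β.1 v) hc) fun x hx => by
      rcases eq_or_ne x v with rfl | hxv
      · simp
      · simpa [hxv] using h x (by simp [hxv, hx])
    refine ⟨Walk.cons (adj_recolor γ hc hv) p, fun x => ?_⟩
    rw [recolorCount_cons_of_ne _ _ (v := v) (by simpa using hv)]
    rcases eq_or_ne x v with rfl | hxv
    · simpa [hv] using hp x
    · simpa [hxv] using hp x

lemma exists_walk_freeing_color [Fintype V] [DecidableEq V] [DecidableRel G.Adj]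
    {S : Finset V} (hS : G.IsIndepSet S) (hdeg : ∀ v ∈ S, G.degree v + 1 < k)
    (γ : PropColoring G k) (u : V) (b : Fin k) :
    ∃ (γ' : PropColoring G k) (p : (ReconfGraph G k).Walk γ γ'),
      (∀ x ∉ S, γ'.1 x = γ.1 x) ∧ (∀ v ∈ S, G.Adj u v → γ'.1 v ≠ b) ∧
      ∀ x, recolorCount x p ≤ if x ∈ S ∧ G.Adj u x then 1 else 0 := by
  choose c hcb hc using fun v (hv : v ∈ S) => γ.exists_color_ne_of_degree_lt (hdeg v hv) b
  let T : V → Prop := fun x => x ∈ S ∧ G.Adj u x ∧ γ.1 x = b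
  let γ' : PropColoring G k := ⟨fun x => if hx : T x then c x hx.1 else γ.1 x, fun x y hxy => by
    by_cases hx : T x <;> by_cases hy : T y <;> simp only [hx, hy, dite_true, dite_false]
    · exact absurd (hx.2.2.trans hy.2.2.symm) (γ.2 x y hxy)
    · exact (hc x hx.1 y hxy).symm
    · exact hc y hy.1 x hxy.symm
    · exact γ.2 x y hxy⟩
  have hoff : ∀ x ∉ S, γ'.1 x = γ.1 x := fun x hx => dif_neg fun hT => hx hT.1
  obtain ⟨p, hp⟩ := exists_walk_of_eq_off_indepSet hS fun x hx => (hoff x hx).symm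
  refine ⟨γ', p, hoff, fun v hv huv => ?_, fun x => (hp x).trans ?_⟩
  · by_cases hT : T v
    · simpa [γ', hT] using hcb v hT.1
    · simp only [γ', hT, dite_false]
      exact fun hvb => hT ⟨hv, huv, hvb⟩
  · by_cases hT : T x
    · simp only [hT.1, hT.2.1, and_self, if_true]
      split <;> omega
    · simp [γ', hT]


lemma exists_walk_lift [Fintype V] [DecidableEq V] [DecidableRel G.Adj] {S : Finset V}
    (hS : G.IsIndepSet S) (hdeg : ∀ v ∈ S, G.degree v + 1 < k)
    {A B : PropColoring (G.induce (↑S)ᶜ) k} (q : (ReconfGraph (G.induce (↑S)ᶜ) k).Walk A B)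
    (γ : PropColoring G k) (hγ : γ.restrict (↑S)ᶜ = A) :
    ∃ (τ : PropColoring G k) (p : (ReconfGraph G k).Walk γ τ), τ.restrict (↑S)ᶜ = B ∧
      (∀ x : ↥(↑S : Set V)ᶜ, recolorCount x.1 p ≤ recolorCount x q) ∧
      ∀ v ∈ S, recolorCount v p ≤
        ∑ u ∈ (G.neighborFinset v).subtype (· ∈ (↑S : Set V)ᶜ), recolorCount u q := by
  induction q generalizing γ with
  | nil => exact ⟨γ, Walk.nil, hγ, by simp, by simp⟩
  | @cons A A₁ B hA q ih =>
    obtain ⟨u, hu, hAA₁⟩ := id hA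
    rw [PropColoring.restrict_eq_iff] at hγ
    obtain ⟨γ', p₁, hγ'S, hγ'b, hp₁⟩ := exists_walk_freeing_color hS hdeg γ u.1 (A₁.1 u)
    have hγ'A (x : ↥(↑S : Set V)ᶜ) : γ'.1 x = A.1 x := (hγ'S x x.2).trans (hγ x)
    have hc : ∀ w, G.Adj u w → γ'.1 w ≠ A₁.1 u := by
      intro w huw
      by_cases hwS : w ∈ S
      · exact hγ'b w hwS huw
      · have hwu : (⟨w, hwS⟩ : ↥(↑S : Set V)ᶜ) ≠ u := fun h =>
          G.ne_of_adj huw (congrArg Subtype.val h).symm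
        rw [hγ'A ⟨w, hwS⟩, hAA₁ _ hwu]
        exact (A₁.2 u ⟨w, hwS⟩ huw).symm
    have hne : γ'.1 u ≠ A₁.1 u := by rw [hγ'A u]; exact hu
    have hγ₁ : (γ'.recolor u (A₁.1 u) hc).restrict (↑S)ᶜ = A₁ := by
      refine (PropColoring.restrict_eq_iff _ _ _).2 fun x => ?_
      rcases eq_or_ne x u with rfl | hxu
      · simp
      · simp [Subtype.val_injective.ne hxu, hγ'A, hAA₁ x hxu]
    obtain ⟨τ, p₂, hτ, hp₂s, hp₂S⟩ := ih _ hγ₁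
    refine ⟨τ, p₁.append (Walk.cons (adj_recolor γ' hc hne) p₂), hτ, fun x => ?_, fun v hv => ?_⟩
    · have hx₁ : recolorCount x.1 p₁ = 0 := by simpa [show x.1 ∉ S from x.2] using hp₁ x
      rw [recolorCount_append, recolorCount_cons_of_ne _ _ (v := u.1) (by simpa using hne),
        recolorCount_cons_of_ne hA q hu, hx₁, zero_add]
      simpa only [Subtype.ext_iff] using Nat.add_le_add_left (hp₂s x) (if x = u then 1 else 0)
    · have hvu : v ≠ u.1 := fun h => u.2 (h ▸ hv)
      have hu_mem : u ∈ (G.neighborFinset v).subtype (· ∈ (↑S : Set V)ᶜ) ↔ G.Adj u v := by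
        simp [G.adj_comm]
      rw [recolorCount_append, recolorCount_cons_of_ne _ _ (v := u.1) (by simpa using hne),
        if_neg hvu, zero_add]
      simp only [recolorCount_cons_of_ne hA q hu, sum_add_distrib, sum_ite_eq', hu_mem]
      have := hp₁ v
      simp only [hv, true_and] at this
      have := hp₂S v hv
      omega

lemma exists_walk_of_walk_induce_compl [Fintype V] [DecidableEq V] [DecidableRel G.Adj]
    {S : Finset V} (hS : G.IsIndepSet S) (hdeg : ∀ v ∈ S, G.degree v + 1 < k)
    (α β : PropColoring G k)
    (q : (ReconfGraph (G.induce (↑S)ᶜ) k).Walk (α.restrict (↑S)ᶜ) (β.restrict (↑S)ᶜ)) :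
    ∃ p : (ReconfGraph G k).Walk α β,
      (∀ x : ↥(↑S : Set V)ᶜ, recolorCount x.1 p ≤ recolorCount x q) ∧
      ∀ v ∈ S, recolorCount v p ≤
        (∑ u ∈ (G.neighborFinset v).subtype (· ∈ (↑S : Set V)ᶜ), recolorCount u q) + 1 := by
  obtain ⟨τ, p₁, hτ, hp₁s, hp₁S⟩ := exists_walk_lift hS hdeg q α rfl
  have hτβ : ∀ x ∉ S, τ.1 x = β.1 x := fun x hx =>
    (PropColoring.restrict_eq_iff _ _ _).1 hτ ⟨x, hx⟩
  obtain ⟨p₂, hp₂⟩ := exists_walk_of_eq_off_indepSet hS hτβ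
  refine ⟨p₁.append p₂, fun x => ?_, fun v hv => ?_⟩
  · have := hp₂ x
    rw [if_pos (hτβ x x.2)] at this
    rw [recolorCount_append]
    have := hp₁s x
    omega
  · rw [recolorCount_append]
    have := hp₁S v hv
    have : recolorCount v p₂ ≤ 1 := (hp₂ v).trans (by split <;> omega)
    omega

end ReconfGraph

namespace SimpleGraph

variable {V W : Type*} {G : SimpleGraph V}

def MaxAvgDegreeLE (G : SimpleGraph V) (x : ℝ) : Prop :=
  ∀ H : G.Subgraph, H.verts.Nonempty → 2 * (H.edgeSet.ncard : ℝ) ≤ x * H.verts.ncard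

lemma MaxAvgDegreeLE.comap {G' : SimpleGraph W} {x : ℝ} (h : G.MaxAvgDegreeLE x)
    (f : G' ↪g G) : G'.MaxAvgDegreeLE x := by
  intro H hH
  have hverts : (H.map f.toHom).verts.ncard = H.verts.ncard :=
    Set.ncard_image_of_injective _ f.injective
  have hedges : (H.map f.toHom).edgeSet.ncard = H.edgeSet.ncard := by
    rw [Subgraph.edgeSet_map]
    exact Set.ncard_image_of_injective _ (Sym2.map.injective f.injective)
  have hmap := h (H.map f.toHom) (hH.image _)
  rwa [hverts, hedges] at hmap

lemma MaxAvgDegreeLE.induce {x : ℝ} (h : G.MaxAvgDegreeLE x) (s : Set V) :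
    (G.induce s).MaxAvgDegreeLE x :=
  h.comap (Embedding.induce s)

lemma MaxAvgDegreeLE.two_mul_card_edgeFinset_le [Fintype V] [Nonempty V] [DecidableRel G.Adj]
    {x : ℝ} (h : G.MaxAvgDegreeLE x) : 2 * (#G.edgeFinset : ℝ) ≤ x * Fintype.card V := by
  have htop := h ⊤ (by simp)
  rwa [Subgraph.edgeSet_top, ← coe_edgeFinset, Set.ncard_coe_finset, Subgraph.verts_top,
    Set.ncard_univ, Nat.card_eq_fintype_card] at htop

/-- Vertices of degree at least `d` contribute at least `d` each to the degree sum
`2|E| ≤ (d - ε) n`. -/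
lemma MaxAvgDegreeLE.mul_card_le_mul_card_degree_lt [Fintype V] [Nonempty V]
    [DecidableRel G.Adj] {d : ℕ} {ε : ℝ} (h : G.MaxAvgDegreeLE (d - ε)) :
    ε * Fintype.card V ≤ d * #{v | G.degree v + 1 ≤ d} := by
  have hsum : ∑ _v : V, d ≤ ∑ v, (G.degree v + if G.degree v + 1 ≤ d then d else 0) :=
    sum_le_sum fun v _ => by split <;> omega
  rw [sum_add_distrib, sum_degrees_eq_twice_card_edges, ← sum_filter] at hsum
  simp only [sum_const, card_univ, smul_eq_mul] at hsum
  have hsum' : (Fintype.card V : ℝ) * d ≤ 2 * #G.edgeFinset + #{v | G.degree v + 1 ≤ d} * d := by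
    exact_mod_cast hsum
  nlinarith [h.two_mul_card_edgeFinset_le]

/-- Greedily pick a vertex of `L` and discard its closed neighbourhood, of size at most `d`. -/
lemma exists_isIndepSet_subset_card_le_mul [Fintype V] [DecidableEq V] [DecidableRel G.Adj]
    {d : ℕ} (L : Finset V) (hL : ∀ v ∈ L, G.degree v + 1 ≤ d) :
    ∃ S ⊆ L, G.IsIndepSet S ∧ #L ≤ d * #S := by
  induction L using Finset.strongInduction with
  | H L ih =>
  rcases L.eq_empty_or_nonempty with rfl | ⟨v, hv⟩
  · exact ⟨∅, empty_subset _, by simp, by simp⟩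
  set N := insert v (G.neighborFinset v)
  have hN : #N ≤ d := (card_insert_le _ _).trans (by simpa using hL v hv)
  obtain ⟨S, hSL, hS, hcard⟩ := ih (L \ N)
    ((ssubset_iff_of_subset sdiff_subset).2
      ⟨v, hv, fun h => (mem_sdiff.1 h).2 (mem_insert_self _ _)⟩)
    fun w hw => hL w (sdiff_subset hw)
  have hvS : v ∉ S := fun h => (mem_sdiff.1 (hSL h)).2 (mem_insert_self _ _)
  refine ⟨insert v S, insert_subset hv (hSL.trans sdiff_subset), ?_, ?_⟩
  · have hnadj : ∀ w ∈ S, ¬G.Adj v w := fun w hw hvw =>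
      (mem_sdiff.1 (hSL hw)).2 (mem_insert_of_mem ((G.mem_neighborFinset v w).2 hvw))
    rw [coe_insert, IsIndepSet, Set.pairwise_insert]
    exact ⟨hS, fun w hw _ => ⟨hnadj w hw, fun hwv => hnadj w hw hwv.symm⟩⟩
  · calc #L ≤ #(L \ N) + #N := card_le_card_sdiff_add_card
      _ ≤ d * #S + d := add_le_add hcard hN
      _ = d * #(insert v S) := by rw [card_insert_of_notMem hvS]; ring

lemma MaxAvgDegreeLE.exists_isIndepSet [Fintype V] [DecidableEq V] [Nonempty V]
    [DecidableRel G.Adj] {d : ℕ} {ε : ℝ} (h : G.MaxAvgDegreeLE (d - ε)) :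
    ∃ S : Finset V, G.IsIndepSet S ∧ (∀ v ∈ S, G.degree v + 1 ≤ d) ∧
      ε * Fintype.card V ≤ d ^ 2 * #S := by
  obtain ⟨S, hSL, hS, hcard⟩ := exists_isIndepSet_subset_card_le_mul
    (G := G) (d := d) {v | G.degree v + 1 ≤ d} fun v hv => (mem_filter.1 hv).2
  refine ⟨S, hS, fun v hv => (mem_filter.1 (hSL hv)).2, ?_⟩
  have hcard' : (#{v | G.degree v + 1 ≤ d} : ℝ) ≤ d * #S := by exact_mod_cast hcard
  nlinarith [h.mul_card_le_mul_card_degree_lt, (Nat.cast_nonneg d : (0 : ℝ) ≤ d)]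

end SimpleGraph

open ReconfGraph

theorem exists_walk_recolorCount_le {d k : ℕ} (hk : d + 1 ≤ k) {ε : ℝ} (hε : 0 < ε)
    (F : ℕ → ℝ) (hF0 : ∀ n, 0 ≤ F n) (hF : Monotone F)
    (hFstep : ∀ m n : ℕ, (d : ℝ) ^ 2 * m + ε * n ≤ d ^ 2 * n → 1 ≤ n →
      (d - 1) * F m + 1 ≤ F n)
    (V : Type) [Fintype V] (G : SimpleGraph V) (hG : G.MaxAvgDegreeLE (d - ε))
    (α β : PropColoring G k) :
    ∃ p : (ReconfGraph G k).Walk α β, ∀ v, (recolorCount v p : ℝ) ≤ F (Fintype.card V) := by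
  induction hn : Fintype.card V using Nat.strong_induction_on generalizing V with
  | _ n ih =>
  classical
  rcases isEmpty_or_nonempty V with hV | hV
  · obtain rfl : α = β := Subtype.ext (funext isEmptyElim)
    exact ⟨Walk.nil, isEmptyElim⟩
  obtain ⟨S, hS, hSdeg, hScard⟩ := hG.exists_isIndepSet
  have hcard : Fintype.card ↥(↑S : Set V)ᶜ + #S = n := by
    simp only [Fintype.card_compl_set, coe_sort_coe, Fintype.card_coe, hn]
    have : #S ≤ n := hn ▸ card_le_univ S
    omega
  have hn1 : 1 ≤ n := hn ▸ Fintype.card_pos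
  have hrec : (d : ℝ) ^ 2 * Fintype.card ↥(↑S : Set V)ᶜ + ε * n ≤ d ^ 2 * n := by
    rw [hn, ← hcard] at hScard
    rw [← hcard]
    push_cast at hScard ⊢
    linear_combination hScard
  have hlt : Fintype.card ↥(↑S : Set V)ᶜ < n := by
    have : (0 : ℝ) < ε * n := mul_pos hε (by exact_mod_cast hn1)
    have : ((d : ℝ) ^ 2) * Fintype.card ↥(↑S : Set V)ᶜ < d ^ 2 * n := by linarith
    exact_mod_cast lt_of_mul_lt_mul_left this (by positivity)
  obtain ⟨q, hq⟩ := ih _ hlt _ (G.induce _) (hG.induce _) (α.restrict _) (β.restrict _) rfl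
  obtain ⟨p, hps, hpS⟩ := exists_walk_of_walk_induce_compl hS
    (fun v hv => (hSdeg v hv).trans_lt (by omega)) α β q
  refine ⟨p, fun v => ?_⟩
  by_cases hv : v ∈ S
  · set T := (G.neighborFinset v).subtype (· ∈ (↑S : Set V)ᶜ)
    have hT : (#T : ℝ) ≤ d - 1 := by
      have : #T + 1 ≤ d := by
        grw [card_subtype, card_filter_le, card_neighborFinset_eq_degree, hSdeg v hv]
      have : ((#T + 1 : ℕ) : ℝ) ≤ d := by exact_mod_cast this
      push_cast at this
      linarith
    calc (recolorCount v p : ℝ) ≤ ((∑ u ∈ T, recolorCount u q : ℕ) : ℝ) + 1 := by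
          exact_mod_cast hpS v hv
      _ ≤ #T * F (Fintype.card ↥(↑S : Set V)ᶜ) + 1 := by
          push_cast
          grw [sum_le_card_nsmul T _ _ fun u _ => hq u, nsmul_eq_mul]
      _ ≤ (d - 1) * F (Fintype.card ↥(↑S : Set V)ᶜ) + 1 := by grw [hT]; exact hF0 _
      _ ≤ F n := hFstep _ _ hrec hn1
  · calc (recolorCount v p : ℝ) ≤ recolorCount (⟨v, hv⟩ : ↥(↑S : Set V)ᶜ) q := by
          exact_mod_cast hps ⟨v, hv⟩
      _ ≤ F (Fintype.card ↥(↑S : Set V)ᶜ) := hq _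
      _ ≤ F n := hF hlt.le

lemma sub_one_mul_mul_rpow_add_one_le {d r c a b : ℝ} (hd : 1 ≤ d) (hr : 0 ≤ r) (hc : 0 ≤ c)
    (hrc : r ^ c = d⁻¹) (ha : 0 ≤ a) (hab : a ≤ r * b) (hb : 1 ≤ b) :
    (d - 1) * (d * a ^ c) + 1 ≤ d * b ^ c := by
  have hda : d * a ^ c ≤ b ^ c :=
    calc d * a ^ c ≤ d * (r * b) ^ c := by gcongr
      _ = b ^ c := by
        rw [Real.mul_rpow hr (by linarith), hrc, ← mul_assoc, mul_inv_cancel₀ (by positivity),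
          one_mul]
  have hb' : 1 ≤ b ^ c := Real.one_le_rpow hb hc
  nlinarith

lemma exists_nonneg_exponent_recursion {d : ℕ} (hd : 0 < d) {ε : ℝ} (hε : 0 < ε)
    (hεd : ε ≤ (d : ℝ) ^ 2) :
    ∃ c : ℝ, 0 ≤ c ∧ ∀ m n : ℕ, (d : ℝ) ^ 2 * m + ε * n ≤ d ^ 2 * n → 1 ≤ n →
      (d - 1) * (d * (m : ℝ) ^ c) + 1 ≤ d * (n : ℝ) ^ c := by
  have hd1 : (1 : ℝ) ≤ d := by exact_mod_cast hd
  set r : ℝ := 1 - ε / (2 * d ^ 2)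
  have hr0 : 0 < r := by
    have : ε / (2 * d ^ 2) ≤ 1 / 2 := by rw [div_le_iff₀ (by positivity)]; linarith
    linarith
  have hr1 : r < 1 := sub_lt_self 1 (by positivity)
  have hc : 0 ≤ Real.logb r (d : ℝ)⁻¹ :=
    Real.logb_nonneg_of_base_lt_one hr0 hr1 (by positivity) (inv_le_one_of_one_le₀ hd1)
  refine ⟨_, hc, fun m n hmn hn => sub_one_mul_mul_rpow_add_one_le hd1 hr0.le hc
    (Real.rpow_logb hr0 hr1.ne (by positivity)) (Nat.cast_nonneg m) ?_ (by exact_mod_cast hn)⟩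
  have hrn : (d : ℝ) ^ 2 * (r * n) = d ^ 2 * n - ε * n / 2 := by simp only [r]; field_simp
  have : (0 : ℝ) ≤ ε * n := by positivity
  nlinarith

/-- **Theorem of Bousquet–Perarnau.** Let `d, k` be positive integers with
`k ≥ d + 1` and `0 < ε ≤ d²`. There exist constants `C` and `c = c(d, ε)` such that for
every graph `G` on `n` vertices with maximum average degree at most `d - ε`, the diameter
of `R_k(G)` is at most `C·n^c`: any two `k`-colourings are joined by a walk of length at
most `C·n^c`. -/
theorem stmt7 (d k : ℕ) (hd : 0 < d) (hk : d + 1 ≤ k) (ε : ℝ) (hε : 0 < ε)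
    (hεd : ε ≤ (d : ℝ) ^ 2) :
    ∃ C c : ℝ, 0 < C ∧ 0 < c ∧
      ∀ (V : Type) (_ : Fintype V) (G : SimpleGraph V),
        (∀ H : G.Subgraph, H.verts.Nonempty →
          2 * (H.edgeSet.ncard : ℝ) ≤ ((d : ℝ) - ε) * H.verts.ncard) →
        ∀ α β : PropColoring G k,
          ∃ p : (ReconfGraph G k).Walk α β,
            (p.length : ℝ) ≤ C * (Fintype.card V : ℝ) ^ c := by
  obtain ⟨c, hc, hstep⟩ := exists_nonneg_exponent_recursion hd hε hεd
  refine ⟨d, c + 1, by positivity, by positivity, fun V _ G hG α β => ?_⟩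
  obtain ⟨p, hp⟩ := exists_walk_recolorCount_le hk hε (fun n => d * (n : ℝ) ^ c)
    (fun n => by positivity) (fun m n hmn => by dsimp only; gcongr) hstep V G hG α β
  refine ⟨p, ?_⟩
  calc (p.length : ℝ) = ∑ v, (recolorCount v p : ℝ) := by
        rw [length_eq_sum_recolorCount]; push_cast; rfl
    _ ≤ ∑ _v : V, d * (Fintype.card V : ℝ) ^ c := sum_le_sum fun v _ => hp v
    _ = d * (Fintype.card V : ℝ) ^ (c + 1) := by
        rw [sum_const, card_univ, nsmul_eq_mul, Real.rpow_add_one' (by positivity) (by positivity)]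
        ring
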